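/- Let G be a finite group such that |γ₂(G)| = p for a prime p and γ₂(G) ≤ Z(G). Then G is isoclinic to an extraspecial p-group. -/

import Mathlib

/-!
Because `γ₂(G)` is central of order `p`, the commutator map `(x, y) ↦ x⁻¹y⁻¹xy` is biadditive and
factors through `V = G/Z(G)`, which is therefore an `𝔽_p`-vector space carrying a nondegenerate
alternating form `ω` with values in `γ₂(G) ≅ 𝔽_p`. Write `ω = B - Bᵀ` with `B` the strictly upper
triangular part of a Gram matrix of `ω` (halving `ω` is impossible when `p = 2`). The group
`V × 𝔽_p` with product `(v, s)(w, t) = (v + w, s + t + B(v, w))` has centre and derived subgroup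
both equal to `0 × 𝔽_p`, and its commutator form is again `ω`; matching the two commutator forms
gives the isoclinism.
-/

lemma mem_commutator_of {G : Type*} [Group G] (x y : G) :
    x⁻¹ * y⁻¹ * x * y ∈ commutator G := by
  have h := Subgroup.commutator_mem_commutator (Subgroup.mem_top x⁻¹) (Subgroup.mem_top y⁻¹)
  show x⁻¹ * y⁻¹ * x * y ∈ ⁅(⊤ : Subgroup G), (⊤ : Subgroup G)⁆
  simpa [commutatorElement_def, mul_assoc] using h

structure Isoclinism (G H : Type*) [Group G] [Group H] where
  α : (G ⧸ Subgroup.center G) ≃* (H ⧸ Subgroup.center H)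
  β : (commutator G) ≃* (commutator H)
  compat : ∀ (x y : G) (x' y' : H),
    α (x : G ⧸ Subgroup.center G) = (x' : H ⧸ Subgroup.center H) →
    α (y : G ⧸ Subgroup.center G) = (y' : H ⧸ Subgroup.center H) →
    (β ⟨x⁻¹ * y⁻¹ * x * y, mem_commutator_of x y⟩ : H) = x'⁻¹ * y'⁻¹ * x' * y'

open Subgroup

section CommPair

variable {G : Type*} [Group G]

def commPair (x y : G) : commutator G := ⟨x⁻¹ * y⁻¹ * x * y, mem_commutator_of x y⟩

theorem commPair_eq_one_iff {x y : G} : commPair x y = 1 ↔ Commute x y := by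
  rw [← Commute.inv_inv_iff, ← commutatorElement_eq_one_iff_commute, Subtype.ext_iff]
  simp [commPair, commutatorElement_def]

theorem commPair_mul_left (hle : commutator G ≤ center G) (x x' y : G) :
    commPair (x * x') y = commPair x y * commPair x' y := by
  have hc := Subgroup.mem_center_iff.mp (hle (mem_commutator_of x y))
  apply Subtype.ext
  calc (x * x')⁻¹ * y⁻¹ * (x * x') * y
      = x'⁻¹ * (x⁻¹ * y⁻¹ * x * y) * (y⁻¹ * x' * y) := by group
    _ = (x⁻¹ * y⁻¹ * x * y) * x'⁻¹ * (y⁻¹ * x' * y) := by rw [hc x'⁻¹]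
    _ = (x⁻¹ * y⁻¹ * x * y) * (x'⁻¹ * y⁻¹ * x' * y) := by group

theorem commPair_mul_right (hle : commutator G ≤ center G) (x y y' : G) :
    commPair x (y * y') = commPair x y * commPair x y' := by
  have hc := Subgroup.mem_center_iff.mp (hle (mem_commutator_of x y))
  apply Subtype.ext
  calc x⁻¹ * (y * y')⁻¹ * x * (y * y')
      = x⁻¹ * y'⁻¹ * x * ((x⁻¹ * y⁻¹ * x * y) * y') := by group
    _ = x⁻¹ * y'⁻¹ * x * (y' * (x⁻¹ * y⁻¹ * x * y)) := by rw [hc y']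
    _ = (x⁻¹ * y'⁻¹ * x * y') * (x⁻¹ * y⁻¹ * x * y) := by group
    _ = (x⁻¹ * y⁻¹ * x * y) * (x⁻¹ * y'⁻¹ * x * y') := hc _

theorem commPair_pow_left (hle : commutator G ≤ center G) (x y : G) (n : ℕ) :
    commPair (x ^ n) y = commPair x y ^ n := by
  induction n with
  | zero => simp [commPair_eq_one_iff]
  | succ n ih => rw [pow_succ, commPair_mul_left hle, ih, pow_succ]

theorem commPair_congr (hle : commutator G ≤ center G) {x x' y y' : G}
    (hx : (x : G ⧸ center G) = x') (hy : (y : G ⧸ center G) = y') :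
    commPair x y = commPair x' y' := by
  obtain ⟨z, hz, rfl⟩ : ∃ z ∈ center G, x * z = x' :=
    ⟨_, QuotientGroup.eq.mp hx, mul_inv_cancel_left x x'⟩
  obtain ⟨w, hw, rfl⟩ : ∃ w ∈ center G, y * w = y' :=
    ⟨_, QuotientGroup.eq.mp hy, mul_inv_cancel_left y y'⟩
  rw [commPair_mul_left hle, commPair_eq_one_iff.mpr (Subgroup.mem_center_iff.mp hz _).symm,
    commPair_mul_right hle, commPair_eq_one_iff.mpr (Subgroup.mem_center_iff.mp hw _), mul_one,
    mul_one]

theorem commute_mk_of_commutator_le_center (hle : commutator G ≤ center G)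
    (a b : G ⧸ center G) : Commute a b := by
  induction a using QuotientGroup.induction_on with | H x =>
  induction b using QuotientGroup.induction_on with | H y =>
  rw [Commute, SemiconjBy, ← QuotientGroup.mk_mul, ← QuotientGroup.mk_mul, QuotientGroup.eq]
  simpa [mul_assoc] using hle (mem_commutator_of y x)

end CommPair

def Isoclinism.ofMulEquivs {G H M C : Type*} [Group G] [Group H] [Group M] [Group C]
    (eG : G ⧸ center G ≃* M) (eH : H ⧸ center H ≃* M)
    (cG : commutator G ≃* C) (cH : commutator H ≃* C) (f : M → M → C)
    (hG : ∀ x y : G, cG (commPair x y) = f (eG x) (eG y))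
    (hH : ∀ x y : H, cH (commPair x y) = f (eH x) (eH y)) : Isoclinism G H where
  α := eG.trans eH.symm
  β := cG.trans cH.symm
  compat x y x' y' hx hy := by
    rw [MulEquiv.trans_apply, MulEquiv.symm_apply_eq] at hx hy
    change ((cH.symm (cG (commPair x y)) : commutator H) : H) = (commPair x' y' : H)
    rw [hG, hx, hy, ← hH, MulEquiv.symm_apply_apply]

theorem LinearMap.IsAlt.exists_sub_flip_eq {R M ι : Type*} [CommRing R] [AddCommGroup M]
    [Module R M] [Fintype ι] [LinearOrder ι] {ω : M →ₗ[R] M →ₗ[R] R} (hω : ω.IsAlt)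
    (b : Module.Basis ι R M) : ∃ B : M →ₗ[R] M →ₗ[R] R, B - B.flip = ω := by
  refine ⟨Matrix.toLinearMap₂ b b <| .of fun i j => if i < j then ω (b i) (b j) else 0, ?_⟩
  refine LinearMap.ext_basis b b fun i j => ?_
  simp only [LinearMap.sub_apply, LinearMap.flip_apply, Matrix.toLinearMap₂_apply_basis]
  rcases lt_trichotomy i j with h | rfl | h
  · simp [h, h.not_gt]
  · simp [hω.self_eq_zero]
  · simp [h, h.not_gt, ← hω.neg (b i)]

/-- The central extension of `V` by `A` with cocycle `B`; a Heisenberg group when `B - Bᵀ` is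
nondegenerate. -/
@[ext]
structure Heisenberg {V A : Type*} [AddCommGroup V] [AddCommGroup A] (B : V →+ V →+ A) where
  v : V
  t : A

namespace Heisenberg

variable {V A : Type*} [AddCommGroup V] [AddCommGroup A] {B : V →+ V →+ A}

instance : Mul (Heisenberg B) := ⟨fun x y => ⟨x.v + y.v, x.t + y.t + B x.v y.v⟩⟩
instance : One (Heisenberg B) := ⟨⟨0, 0⟩⟩
instance : Inv (Heisenberg B) := ⟨fun x => ⟨-x.v, B x.v x.v - x.t⟩⟩

@[simp] lemma mul_v (x y : Heisenberg B) : (x * y).v = x.v + y.v := rfl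
@[simp] lemma mul_t (x y : Heisenberg B) : (x * y).t = x.t + y.t + B x.v y.v := rfl
@[simp] lemma one_v : (1 : Heisenberg B).v = 0 := rfl
@[simp] lemma one_t : (1 : Heisenberg B).t = 0 := rfl
@[simp] lemma inv_v (x : Heisenberg B) : x⁻¹.v = -x.v := rfl
@[simp] lemma inv_t (x : Heisenberg B) : x⁻¹.t = B x.v x.v - x.t := rfl

instance : Group (Heisenberg B) where
  mul_assoc x y z := by ext <;> simp only [mul_v, mul_t, map_add, AddMonoidHom.add_apply] <;> abel
  one_mul x := by ext <;> simp
  mul_one x := by ext <;> simp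
  inv_mul_cancel x := by ext <;> simp

theorem coe_commPair (x y : Heisenberg B) :
    (commPair x y : Heisenberg B) = ⟨0, B x.v y.v - B y.v x.v⟩ := by
  ext <;> simp only [commPair, mul_v, mul_t, inv_v, inv_t, map_add, map_neg, AddMonoidHom.add_apply,
    AddMonoidHom.neg_apply] <;> abel

theorem mem_center_iff {x : Heisenberg B} : x ∈ center (Heisenberg B) ↔ ∀ w, B x.v w = B w x.v := by
  rw [Subgroup.mem_center_iff]
  refine ⟨fun h w => ?_, fun h g => ?_⟩
  · have := congrArg t (h ⟨w, 0⟩)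
    simp only [mul_t, zero_add, add_zero] at this
    exact (add_left_cancel this).symm
  · ext
    · exact add_comm _ _
    · simp [h, add_comm]

def proj : Heisenberg B →* Multiplicative V where
  toFun x := .ofAdd x.v
  map_one' := rfl
  map_mul' _ _ := rfl

theorem proj_surjective : Function.Surjective (proj (B := B)) := fun w => ⟨⟨w.toAdd, 0⟩, rfl⟩

theorem mem_ker_proj {x : Heisenberg B} : x ∈ (proj (B := B)).ker ↔ x.v = 0 := ofAdd_eq_one

theorem center_eq_ker (hsep : ∀ v, (∀ w, B v w = B w v) → v = 0) :
    center (Heisenberg B) = proj.ker := by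
  ext x
  rw [mem_center_iff, mem_ker_proj]
  exact ⟨hsep x.v, fun h w => by simp [h]⟩

theorem commutator_eq_ker (hsurj : ∀ s, ∃ v w, B v w - B w v = s) :
    commutator (Heisenberg B) = proj.ker := by
  refine le_antisymm (Abelianization.commutator_subset_ker _) fun x hx => ?_
  obtain ⟨v, w, h⟩ := hsurj x.t
  have : x = commPair (⟨v, 0⟩ : Heisenberg B) ⟨w, 0⟩ := by
    rw [coe_commPair]
    ext
    · exact mem_ker_proj.1 hx
    · exact h.symm
  exact this ▸ (commPair _ _).2

def kerProjEquiv : (proj (B := B)).ker ≃* Multiplicative A where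
  toFun x := .ofAdd x.1.t
  invFun s := ⟨⟨0, s.toAdd⟩, rfl⟩
  left_inv x := Subtype.ext <| Heisenberg.ext (mem_ker_proj.1 x.2).symm rfl
  right_inv _ := rfl
  map_mul' x y := by simp [mem_ker_proj.1 x.2]

def equivProd : Heisenberg B ≃ V × A where
  toFun x := (x.v, x.t)
  invFun z := ⟨z.1, z.2⟩
  left_inv _ := rfl
  right_inv _ := rfl

instance [Finite V] [Finite A] : Finite (Heisenberg B) := .of_equiv _ equivProd.symm

theorem natCard_eq : Nat.card (Heisenberg B) = Nat.card V * Nat.card A := by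
  rw [Nat.card_congr equivProd, Nat.card_prod]

end Heisenberg

theorem exists_mulEquiv_pi_zmod {Q : Type*} [Group Q] [Finite Q] (p : ℕ) [Fact p.Prime]
    (hcomm : ∀ a b : Q, Commute a b) (hexp : ∀ a : Q, a ^ p = 1) :
    ∃ n, Nonempty (Q ≃* Multiplicative (Fin n → ZMod p)) := by
  let _ : CommGroup Q := { mul_comm := hcomm }
  -- a `let` here would expose the match on `p` inside `zmodModule` and stall instance search
  have _ : Module (ZMod p) (Additive Q) := AddCommGroup.zmodModule fun a => hexp a.toMul
  exact ⟨_, ⟨AddEquiv.toMultiplicativeRight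
    (Module.finBasis (ZMod p) (Additive Q)).equivFun.toAddEquiv⟩⟩

theorem exists_toAdd_mk_eq {G W : Type*} [Group G] [AddGroup W] {N : Subgroup G} [N.Normal]
    (e : G ⧸ N ≃* Multiplicative W) (a : W) : ∃ x : G, (e x).toAdd = a :=
  ((e.surjective.comp QuotientGroup.mk_surjective) (.ofAdd a)).imp fun _ =>
    congrArg Multiplicative.toAdd

section CommutatorForm

variable {G W : Type*} [Group G] [AddCommGroup W] {p : ℕ} [Module (ZMod p) W]
  (e : G ⧸ center G ≃* Multiplicative W) (ψ : commutator G ≃* Multiplicative (ZMod p))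

theorem exists_linearMap₂_commPair (hle : commutator G ≤ center G) :
    ∃ ω : W →ₗ[ZMod p] W →ₗ[ZMod p] ZMod p,
      ∀ x y : G, ψ (commPair x y) = .ofAdd (ω (e x).toAdd (e y).toAdd) := by
  choose s hs using exists_toAdd_mk_eq e
  let F (a b : W) : ZMod p := (ψ (commPair (s a) (s b))).toAdd
  have hF (x y : G) : F (e x).toAdd (e y).toAdd = (ψ (commPair x y)).toAdd := by
    change (ψ (commPair (s _) (s _))).toAdd = _
    rw [commPair_congr hle (e.injective (Multiplicative.toAdd.injective (hs _)))
      (e.injective (Multiplicative.toAdd.injective (hs _)))]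
  have add_left (a a' b : W) : F (a + a') b = F a b + F a' b := by
    obtain ⟨x, rfl⟩ := exists_toAdd_mk_eq e a
    obtain ⟨x', rfl⟩ := exists_toAdd_mk_eq e a'
    obtain ⟨y, rfl⟩ := exists_toAdd_mk_eq e b
    rw [← toAdd_mul, ← map_mul, ← QuotientGroup.mk_mul, hF, hF, hF, commPair_mul_left hle,
      map_mul, toAdd_mul]
  have add_right (a b b' : W) : F a (b + b') = F a b + F a b' := by
    obtain ⟨x, rfl⟩ := exists_toAdd_mk_eq e a
    obtain ⟨y, rfl⟩ := exists_toAdd_mk_eq e b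
    obtain ⟨y', rfl⟩ := exists_toAdd_mk_eq e b'
    rw [← toAdd_mul, ← map_mul, ← QuotientGroup.mk_mul, hF, hF, hF, commPair_mul_right hle,
      map_mul, toAdd_mul]
  let Fhom : W →+ W →+ ZMod p :=
    AddMonoidHom.mk' (fun a => AddMonoidHom.mk' (F a) (add_right a)) fun a a' =>
      AddMonoidHom.ext (add_left a a')
  refine ⟨((AddMonoidHom.toZModLinearMapEquiv p).toAddMonoidHom.comp Fhom).toZModLinearMap p,
    fun x y => ?_⟩
  change _ = Multiplicative.ofAdd (F _ _)
  rw [hF, ofAdd_toAdd]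

variable {e ψ} {ω : W →ₗ[ZMod p] W →ₗ[ZMod p] ZMod p}
  (hω : ∀ x y : G, ψ (commPair x y) = .ofAdd (ω (e x).toAdd (e y).toAdd))
include hω

theorem isAlt_of_commPair : ω.IsAlt := fun a => by
  obtain ⟨x, rfl⟩ := exists_toAdd_mk_eq e a
  rw [← ofAdd_eq_one, ← hω, commPair_eq_one_iff.mpr (Commute.refl x), map_one]

theorem separatingLeft_of_commPair : ω.SeparatingLeft := fun a ha => by
  obtain ⟨x, rfl⟩ := exists_toAdd_mk_eq e a
  have hx : x ∈ center G := Subgroup.mem_center_iff.mpr fun y => by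
    have := ha (e y).toAdd
    rw [← ofAdd_eq_one, ← hω, MulEquiv.map_eq_one_iff, commPair_eq_one_iff] at this
    exact this.symm
  rw [(QuotientGroup.eq_one_iff x).mpr hx, map_one, toAdd_one]

theorem ne_zero_of_commPair (hbot : commutator G ≠ ⊥) : ω ≠ 0 := by
  rintro rfl
  refine hbot (commutator_eq_bot_iff_le_centralizer.mpr fun x _ => ?_)
  refine Subgroup.mem_centralizer_iff.mpr fun y _ => ?_
  have := hω y x
  rw [LinearMap.zero_apply, LinearMap.zero_apply, ofAdd_zero, MulEquiv.map_eq_one_iff,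
    commPair_eq_one_iff] at this
  exact this

end CommutatorForm

theorem exists_alternating_commutator_form {G : Type*} [Group G] [Finite G] (p : ℕ) [Fact p.Prime]
    (hcard : Nat.card (commutator G) = p) (hle : commutator G ≤ center G) :
    ∃ (n : ℕ) (ω : (Fin n → ZMod p) →ₗ[ZMod p] (Fin n → ZMod p) →ₗ[ZMod p] ZMod p)
      (eG : G ⧸ center G ≃* Multiplicative (Fin n → ZMod p))
      (cG : commutator G ≃* Multiplicative (ZMod p)),
      ω.IsAlt ∧ ω.SeparatingLeft ∧ ω ≠ 0 ∧
        ∀ x y : G, cG (commPair x y) = .ofAdd (ω (eG x).toAdd (eG y).toAdd) := by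
  have hexp (a : G ⧸ center G) : a ^ p = 1 := by
    induction a using QuotientGroup.induction_on with | H x =>
    rw [← QuotientGroup.mk_pow, QuotientGroup.eq_one_iff, Subgroup.mem_center_iff]
    intro y
    refine (commPair_eq_one_iff.mp ?_).symm
    rw [commPair_pow_left hle, ← hcard, pow_card_eq_one']
  obtain ⟨n, ⟨eG⟩⟩ := exists_mulEquiv_pi_zmod p (commute_mk_of_commutator_le_center hle) hexp
  let cG : commutator G ≃* Multiplicative (ZMod p) := mulEquivOfPrimeCardEq hcard (by simp)
  obtain ⟨ω, hω⟩ := exists_linearMap₂_commPair eG cG hle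
  have hbot : commutator G ≠ ⊥ :=
    (Subgroup.one_lt_card_iff_ne_bot _).mp (hcard ▸ (Fact.out : p.Prime).one_lt)
  exact ⟨n, ω, eG, cG, isAlt_of_commPair hω, separatingLeft_of_commPair hω,
    ne_zero_of_commPair hω hbot, hω⟩

theorem exists_extraspecial_of_isAlt {p : ℕ} [Fact p.Prime] {W : Type} [AddCommGroup W]
    [Module (ZMod p) W] [Finite W] {ω : W →ₗ[ZMod p] W →ₗ[ZMod p] ZMod p} (hω : ω.IsAlt)
    (hsep : ω.SeparatingLeft) (hne : ω ≠ 0) :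
    ∃ (H : Type) (_ : Group H) (_ : Finite H) (eH : H ⧸ center H ≃* Multiplicative W)
      (cH : commutator H ≃* Multiplicative (ZMod p)),
      IsPGroup p H ∧ center H = commutator H ∧ Nat.card (center H) = p ∧
        ∀ x y : H, cH (commPair x y) = .ofAdd (ω (eH x).toAdd (eH y).toAdd) := by
  obtain ⟨B, hB⟩ := hω.exists_sub_flip_eq (Module.finBasis (ZMod p) W)
  let B' : W →+ W →+ ZMod p := LinearMap.toAddMonoidHom'.comp B.toAddMonoidHom
  have hBω (v w : W) : B' v w - B' w v = ω v w := by rw [← hB]; rfl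
  obtain ⟨a, b, hab⟩ : ∃ a b, ω a b ≠ 0 := by
    by_contra! h
    exact hne (LinearMap.ext₂ h)
  have hZ : center (Heisenberg B') = Heisenberg.proj.ker :=
    Heisenberg.center_eq_ker fun v h => hsep v fun w => by rw [← hBω, sub_eq_zero]; exact h w
  have hC : commutator (Heisenberg B') = Heisenberg.proj.ker :=
    Heisenberg.commutator_eq_ker fun s => ⟨(s / ω a b) • a, b, by
      rw [hBω, map_smul, LinearMap.smul_apply, smul_eq_mul, div_mul_cancel₀ _ hab]⟩
  let cZ : center (Heisenberg B') ≃* Multiplicative (ZMod p) :=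
    (MulEquiv.subgroupCongr hZ).trans Heisenberg.kerProjEquiv
  refine ⟨Heisenberg B', inferInstance, inferInstance,
    (QuotientGroup.quotientMulEquivOfEq hZ).trans
      (QuotientGroup.quotientKerEquivOfSurjective _ Heisenberg.proj_surjective),
    (MulEquiv.subgroupCongr hC).trans Heisenberg.kerProjEquiv, ?_, hZ.trans hC.symm, ?_,
    fun x y => ?_⟩
  · refine IsPGroup.of_card (n := Module.finrank (ZMod p) W + 1) ?_
    rw [Heisenberg.natCard_eq, Module.natCard_eq_pow_finrank (K := ZMod p), Nat.card_zmod, pow_succ]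
  · rw [Nat.card_congr cZ.toEquiv, Nat.card_congr Multiplicative.toAdd, Nat.card_zmod]
  · change Multiplicative.ofAdd (commPair x y : Heisenberg B').t = _
    rw [Heisenberg.coe_commPair]
    exact congrArg _ (hBω _ _)

theorem stmt_9 {G : Type*} [Group G] [Finite G] (p : ℕ) [Fact p.Prime]
    (hcard : Nat.card (commutator G) = p)
    (hle : commutator G ≤ Subgroup.center G) :
    ∃ (H : Type) (_ : Group H) (_ : Finite H),
      IsPGroup p H ∧ Subgroup.center H = commutator H ∧
        Nat.card (Subgroup.center H) = p ∧ Nonempty (Isoclinism G H) := by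
  obtain ⟨n, ω, eG, cG, hω, hsep, hne, hG⟩ := exists_alternating_commutator_form p hcard hle
  obtain ⟨H, _, hfin, eH, cH, hp, hZ, hcardZ, hH⟩ := exists_extraspecial_of_isAlt hω hsep hne
  exact ⟨H, _, hfin, hp, hZ, hcardZ, ⟨Isoclinism.ofMulEquivs eG eH cG cH
    (fun a b => .ofAdd (ω a.toAdd b.toAdd)) hG hH⟩⟩
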